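/- Let ε ∈ (0, 1/4) and let p_1(·), ..., p_r(·) be probability assignments over an alphabet K ∪ {⊥} such that for each i there is a target symbol m_i ∈ K with p_i(m_i) + 0.5·p_i(⊥) ≥ 1 - β, where β < 1/2. For each i, let σ_i = argmax_{σ ∈ K} p_i(σ) with likelihood p_i = max_{σ∈K} p_i(σ), and assume for each i at most one σ ∈ K has p_i(σ) > 0. Define p = min_i p_i, and output Σσ_i with probability p and ⊥ otherwise. Then letting p_correct be the probability the output equals Σm_i and p_⊥ the probability of ⊥, we have p_correct + 0.5·p_⊥ ≥ 1 - β. -/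
import Mathlib


/-- Recursive combination step of the tensor-code decoder: combining per-coordinate
smooth-decoding guarantees (with half-credit for erasures `⊥ = none`) through a sum
preserves the half-credit confidence bound. -/
theorem stmt_18 {K : Type*} [Fintype K] [AddCommMonoid K] [DecidableEq K]
    (r : ℕ) (hr : 0 < r) (ε β : ℝ) (hε : ε ∈ Set.Ioo (0 : ℝ) (1 / 4)) (hβ : β < 1 / 2)
    (p : Fin r → Option K → ℝ) (m : Fin r → K)
    (hnonneg : ∀ i σ, 0 ≤ p i σ)
    (hsum : ∀ i, ∑ σ : Option K, p i σ = 1)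
    (hconf : ∀ i, 1 - β ≤ p i (some (m i)) + 0.5 * p i none)
    (huniq : ∀ i (σ σ' : K), 0 < p i (some σ) → 0 < p i (some σ') → σ = σ')
    (σsel : Fin r → K) (hargmax : ∀ i (τ : K), p i (some τ) ≤ p i (some (σsel i))) :
    (if (∑ i, σsel i) = (∑ i, m i) then (⨅ i, p i (some (σsel i))) else 0) +
      0.5 * (1 - ⨅ i, p i (some (σsel i))) ≥ 1 - β := by
  haveI : Nonempty (Fin r) := ⟨⟨0, hr⟩⟩
  have key : ∀ i, p i none + p i (some (σsel i)) ≤ 1 := by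
    intro i
    have hs := hsum i
    rw [Fintype.sum_option] at hs
    have h2 : p i (some (σsel i)) ≤ ∑ k : K, p i (some k) :=
      Finset.single_le_sum (fun k _ => hnonneg i _) (Finset.mem_univ _)
    linarith
  split_ifs with h
  · have hlb : (1 : ℝ) - 2 * β ≤ ⨅ i, p i (some (σsel i)) := by
      refine le_ciInf fun i => ?_
      have h1 := hconf i
      have h2 := hargmax i (m i)
      have h3 := key i
      linarith
    set P := ⨅ i, p i (some (σsel i))
    linarith
  · have hex : ∃ i, σsel i ≠ m i := by
      by_contra hall
      push_neg at hall
      exact h (Finset.sum_congr rfl fun i _ => hall i)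
    obtain ⟨i₀, hi₀⟩ := hex
    have hq0 : p i₀ (some (m i₀)) = 0 := by
      by_contra hne
      have hpos : 0 < p i₀ (some (m i₀)) :=
        lt_of_le_of_ne (hnonneg _ _) (Ne.symm hne)
      have hpos2 : 0 < p i₀ (some (σsel i₀)) :=
        lt_of_lt_of_le hpos (hargmax i₀ (m i₀))
      exact hi₀ (huniq i₀ _ _ hpos2 hpos)
    have hP : (⨅ i, p i (some (σsel i))) ≤ p i₀ (some (σsel i₀)) :=
      ciInf_le (Finite.bddBelow_range _) i₀
    have h1 := hconf i₀
    have h3 := key i₀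
    linarith
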